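/- arXiv:2004.14939 — 3 statements merged into one kernel-verified Lean document; each statement's English description precedes it below -/
import Mathlib

section
/- The nomination probability q_r = Σ_{y=1}^{⌊k_q⌋} P[Y = y | R = r] + (k_q − ⌊k_q⌋)·P[Y = ⌊k_q⌋+1 | R = r] is non-increasing in r, where k_q = (k/n)·m. -/
/-- The pool-position probability P[Y = y | R = r]. -/
noncomputable def poolProb (n m r y : ℕ) : ℝ :=
  ((r - 1).choose (y - 1) * (n - r).choose (m - y) : ℝ) / ((n - 1).choose (m - 1) : ℝ)

/-- The per-pool nomination probability q_r with quota k_q = km/n: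
full nomination for positions ≤ ⌊k_q⌋, fractional mass k_q − ⌊k_q⌋ at ⌊k_q⌋+1. -/
noncomputable def nomProb (n m k r : ℕ) : ℝ :=
  let kq : ℝ := (k * m : ℝ) / (n : ℝ)
  (∑ y ∈ Finset.Icc 1 ⌊kq⌋₊, poolProb n m r y)
    + (kq - (⌊kq⌋₊ : ℝ)) * poolProb n m r (⌊kq⌋₊ + 1)

open Finset

/-! The other `m - 1` members of a pool of agent `r` are a uniform subset of the `r - 1` better
and `n - r` worse agents, and `Y - 1` is the number of better ones among them. Passing from `r` to
`r + 1` turns one worse agent into a better one, which can only push `Y` up: the partial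
Vandermonde sums `∑_{j<t} C(a+1, j) C(b, M-j) ≤ ∑_{j<t} C(a, j) C(b+1, M-j)` express this, so the
distribution function `F_r(t) = P[Y ≤ t | R = r]` is non-increasing in `r`. Finally
`q_r = (1 - α) F_r(⌊k_q⌋) + α F_r(⌊k_q⌋ + 1)` with `α = k_q - ⌊k_q⌋ ∈ [0, 1]`. -/

/-- Pascal's rule on both factors makes the difference of the two sums telescope. -/
theorem sum_range_choose_mul_succ_choose (a b M t : ℕ) (ht : t < M) :
    ∑ j ∈ range (t + 1), a.choose j * (b + 1).choose (M - j)
      = ∑ j ∈ range (t + 1), (a + 1).choose j * b.choose (M - j)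
        + a.choose t * b.choose (M - t - 1) := by
  induction t with
  | zero =>
    obtain ⟨s, rfl⟩ : ∃ s, M = s + 1 := ⟨M - 1, by omega⟩
    simp [Nat.choose_succ_succ' b s]
    ring
  | succ t ih =>
    obtain ⟨u, rfl⟩ : ∃ u, M = t + 2 + u := ⟨M - (t + 2), by omega⟩
    rw [sum_range_succ, sum_range_succ (fun j ↦ (a + 1).choose j * b.choose (t + 2 + u - j)),
      ih (by omega), show t + 2 + u - (t + 1) = u + 1 by omega,
      show t + 2 + u - t - 1 = u + 1 by omega, Nat.add_sub_cancel,
      Nat.choose_succ_succ' b u, Nat.choose_succ_succ' a t]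
    ring

theorem sum_range_succ_choose_mul_choose_le (a b M t : ℕ) (ht : t ≤ M + 1) :
    ∑ j ∈ range t, (a + 1).choose j * b.choose (M - j)
      ≤ ∑ j ∈ range t, a.choose j * (b + 1).choose (M - j) := by
  obtain ht | rfl := ht.lt_or_eq
  · cases t with
    | zero => simp
    | succ t =>
      rw [sum_range_choose_mul_succ_choose a b M t (by omega)]
      exact Nat.le_add_right _ _
  · have vandermonde (c d : ℕ) :
        ∑ j ∈ range (M + 1), c.choose j * d.choose (M - j) = (c + d).choose M := by
      rw [Nat.add_choose_eq, Nat.sum_antidiagonal_eq_sum_range_succ_mk]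
    rw [vandermonde, vandermonde, add_right_comm a 1 b, add_assoc]

noncomputable def poolCDF (n m r t : ℕ) : ℝ :=
  ∑ y ∈ Icc 1 t, poolProb n m r y

theorem poolCDF_eq (n m r t : ℕ) :
    poolCDF n m r t = ((∑ j ∈ range t, (r - 1).choose j * (n - r).choose (m - 1 - j) : ℕ) : ℝ)
      / (n - 1).choose (m - 1) := by
  rw [poolCDF, ← Finset.Ico_add_one_right_eq_Icc, sum_Ico_eq_sum_range, Nat.add_sub_cancel,
    Nat.cast_sum, sum_div]
  refine sum_congr rfl fun j _ ↦ ?_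
  rw [poolProb, Nat.add_sub_cancel_left, Nat.sub_sub, add_comm 1 j]
  push_cast
  rfl

theorem poolCDF_succ_le (n m r t : ℕ) (hr : 1 ≤ r) (hrn : r < n) (ht : t ≤ m) :
    poolCDF n m (r + 1) t ≤ poolCDF n m r t := by
  rw [poolCDF_eq, poolCDF_eq]
  refine div_le_div_of_nonneg_right ?_ (Nat.cast_nonneg _)
  norm_cast
  obtain ⟨a, rfl⟩ : ∃ a, r = a + 1 := ⟨r - 1, by omega⟩
  obtain ⟨b, hb⟩ : ∃ b, n - (a + 1) = b + 1 := ⟨n - (a + 1) - 1, by omega⟩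
  rw [Nat.add_sub_cancel, Nat.add_sub_cancel, show n - (a + 1 + 1) = b by omega, hb]
  exact sum_range_succ_choose_mul_choose_le a b (m - 1) t (by omega)

theorem poolCDF_antitoneOn (n m t : ℕ) (ht : t ≤ m) :
    AntitoneOn (fun r ↦ poolCDF n m r t) (Set.Icc 1 n) := by
  refine antitoneOn_of_succ_le Set.ordConnected_Icc fun r _ hr hr' ↦ ?_
  rw [Order.succ_eq_add_one] at hr' ⊢
  exact poolCDF_succ_le n m r t hr.1 (by simpa using hr'.2) ht

theorem nomProb_eq_poolCDF (n m k r : ℕ) :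
    nomProb n m k r
      = (1 - ((k * m / n : ℝ) - ⌊(k * m / n : ℝ)⌋₊)) * poolCDF n m r ⌊(k * m / n : ℝ)⌋₊
        + ((k * m / n : ℝ) - ⌊(k * m / n : ℝ)⌋₊) * poolCDF n m r (⌊(k * m / n : ℝ)⌋₊ + 1) := by
  rw [nomProb, poolCDF, poolCDF, sum_Icc_succ_top (by omega)]
  ring

theorem nomProb_antitone_general (n m k r r' : ℕ)
    (hkn : k < n) (hm1 : 1 ≤ m)
    (hr1 : 1 ≤ r) (hrr' : r ≤ r') (hr'n : r' ≤ n) :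
    nomProb n m k r' ≤ nomProb n m k r := by
  set kq : ℝ := k * m / n
  have hkq : 0 ≤ kq := by positivity
  have hkq_lt : kq < m := by
    rw [div_lt_iff₀ (by exact_mod_cast hkn.trans_le' k.zero_le), mul_comm]
    gcongr
  have hfloor : ⌊kq⌋₊ + 1 ≤ m := (Nat.floor_lt hkq).2 hkq_lt
  have hr : r ∈ Set.Icc 1 n := ⟨hr1, hrr'.trans hr'n⟩
  have hr' : r' ∈ Set.Icc 1 n := ⟨hr1.trans hrr', hr'n⟩
  rw [nomProb_eq_poolCDF, nomProb_eq_poolCDF]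
  have hα0 : 0 ≤ kq - ⌊kq⌋₊ := sub_nonneg.2 (Nat.floor_le hkq)
  have hα1 : kq - ⌊kq⌋₊ ≤ 1 := by linarith [Nat.lt_floor_add_one kq]
  gcongr
  · exact poolCDF_antitoneOn n m _ (Nat.le_of_succ_le hfloor) hr hr' hrr'
  · exact poolCDF_antitoneOn n m _ hfloor hr hr' hrr'

/-- the nomination probability q_r is non-increasing in r. -/
theorem nomProb_antitone (n m k r r' : ℕ)
    (hk0 : 0 < k) (hkn : k < n) (hm1 : 1 ≤ m) (hmn : m ≤ n)
    (hr1 : 1 ≤ r) (hrr' : r ≤ r') (hr'n : r' ≤ n) :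
    nomProb n m k r' ≤ nomProb n m k r :=
  nomProb_antitone_general n m k r r' hkn hm1 hr1 hrr' hr'n
end

section
/- PeerNomination is strategyproof: the probability that agent j is accepted depends only on the reviews submitted by agents other than j, so no change in j's own submitted ranking changes j's probability of selection. -/
/-- The probability that at least `t` of a finite family of independent
Bernoulli indicators, indexed by `Rev` with success probabilities `p`,
succeed (the acceptance probability in PeerNomination). -/
noncomputable def accProb {α : Type*} [DecidableEq α]
    (Rev : Finset α) (p : α → ℝ) (t : ℕ) : ℝ :=
  ∑ T ∈ Rev.powerset.filter (fun T => t ≤ T.card),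
    (∏ i ∈ T, p i) * ∏ i ∈ Rev \ T, (1 - p i)

/-- PeerNomination is strategyproof.  Agent j is accepted iff at
least ⌈m/2⌉ of the reviewers in A⁻¹(j) (which does not contain j) nominate j,
each nominating independently with a probability `nomP (σ i j)` depending only
on the rank reviewer i gives to j.  If two profiles σ, σ' agree on all agents
other than j, then j's acceptance probability is the same under both, i.e. it
does not depend on j's own submitted ranking. -/
theorem peerNomination_strategyproof (n : ℕ)
    (Rev : Fin n → Finset (Fin n)) (j : Fin n) (hj : j ∉ Rev j)
    (nomP : ℕ → ℝ) (σ σ' : Fin n → Fin n → ℕ)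
    (hagree : ∀ i : Fin n, i ≠ j → σ i = σ' i) :
    accProb (Rev j) (fun i => nomP (σ i j)) (((Rev j).card + 1) / 2)
      = accProb (Rev j) (fun i => nomP (σ' i j)) (((Rev j).card + 1) / 2) := by
  have key : ∀ i ∈ Rev j, σ i j = σ' i j := by
    intro i hi
    have : i ≠ j := fun h => hj (h ▸ hi)
    rw [hagree i this]
  unfold accProb
  refine Finset.sum_congr rfl fun T hT => ?_
  simp only [Finset.mem_filter, Finset.mem_powerset] at hT
  congr 1
  · exact Finset.prod_congr rfl fun i hi => by simp only []; rw [key i (hT.1 hi)]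
  · exact Finset.prod_congr rfl fun i hi => by
      simp only []; rw [key i (Finset.mem_sdiff.mp hi).1]
end

section
/- PeerNomination is monotonic: if one reviewer i improves agent j's position in i's ranking (decreases σ_i(j)) while all other reviews are unchanged, then j's probability of acceptance does not decrease. -/
noncomputable def nomProbOfRank (Q : ℝ) (pos : ℕ) : ℝ :=
  if pos ≤ ⌊Q⌋₊ then 1 else if pos = ⌊Q⌋₊ + 1 then Q - (⌊Q⌋₊ : ℝ) else 0

lemma nomProb_nonneg (Q : ℝ) (hQ : 0 ≤ Q) (pos : ℕ) : 0 ≤ nomProbOfRank Q pos := by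
  unfold nomProbOfRank
  have h1 : (⌊Q⌋₊ : ℝ) ≤ Q := Nat.floor_le hQ
  split_ifs <;> linarith

lemma nomProb_le_one (Q : ℝ) (pos : ℕ) : nomProbOfRank Q pos ≤ 1 := by
  unfold nomProbOfRank
  have h2 : Q < ⌊Q⌋₊ + 1 := Nat.lt_floor_add_one Q
  split_ifs <;> linarith

lemma nomProb_anti (Q : ℝ) (hQ : 0 ≤ Q) {a b : ℕ} (h : a ≤ b) :
    nomProbOfRank Q b ≤ nomProbOfRank Q a := by
  unfold nomProbOfRank
  have h1 : (⌊Q⌋₊ : ℝ) ≤ Q := Nat.floor_le hQ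
  have h2 : Q < ⌊Q⌋₊ + 1 := Nat.lt_floor_add_one Q
  split_ifs <;> first | linarith | omega

lemma accProb_congr {α : Type*} [DecidableEq α] {s : Finset α} {p q : α → ℝ}
    (h : ∀ i ∈ s, p i = q i) (t : ℕ) : accProb s p t = accProb s q t := by
  unfold accProb
  refine Finset.sum_congr rfl fun T hT => ?_
  simp only [Finset.mem_filter, Finset.mem_powerset] at hT
  congr 1
  · exact Finset.prod_congr rfl fun i hi => h i (hT.1 hi)
  · exact Finset.prod_congr rfl fun i hi => by rw [h i (Finset.mem_sdiff.1 hi).1]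

lemma accProb_nonneg {α : Type*} [DecidableEq α] {s : Finset α} {p : α → ℝ}
    (hp : ∀ i ∈ s, 0 ≤ p i ∧ p i ≤ 1) (t : ℕ) : 0 ≤ accProb s p t := by
  unfold accProb
  refine Finset.sum_nonneg fun T hT => ?_
  simp only [Finset.mem_filter, Finset.mem_powerset] at hT
  refine mul_nonneg (Finset.prod_nonneg fun i hi => (hp i (hT.1 hi)).1)
    (Finset.prod_nonneg fun i hi => ?_)
  have := (hp i (Finset.mem_sdiff.1 hi).1).2
  linarith

lemma accProb_anti_t {α : Type*} [DecidableEq α] {s : Finset α} {p : α → ℝ}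
    (hp : ∀ i ∈ s, 0 ≤ p i ∧ p i ≤ 1) {t t' : ℕ} (h : t ≤ t') :
    accProb s p t' ≤ accProb s p t := by
  unfold accProb
  refine Finset.sum_le_sum_of_subset_of_nonneg (fun T hT => ?_) fun T hT _ => ?_
  · simp only [Finset.mem_filter, Finset.mem_powerset] at hT ⊢
    exact ⟨hT.1, le_trans h hT.2⟩
  · simp only [Finset.mem_filter, Finset.mem_powerset] at hT
    refine mul_nonneg (Finset.prod_nonneg fun i hi => (hp i (hT.1 hi)).1)
      (Finset.prod_nonneg fun i hi => ?_)
    have := (hp i (Finset.mem_sdiff.1 hi).1).2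
    linarith

lemma accProb_insert {α : Type*} [DecidableEq α] {s : Finset α} {a : α} (ha : a ∉ s)
    (p : α → ℝ) (t : ℕ) :
    accProb (insert a s) p t
      = p a * accProb s p (t - 1) + (1 - p a) * accProb s p t := by
  unfold accProb
  rw [Finset.sum_filter, Finset.sum_filter, Finset.sum_filter,
    Finset.sum_powerset_insert ha, Finset.mul_sum, Finset.mul_sum]
  rw [add_comm]
  congr 1
  · -- sum over insert a T
    refine Finset.sum_congr rfl fun T hT => ?_
    simp only [Finset.mem_powerset] at hT
    have haT : a ∉ T := fun h => ha (hT h)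
    rw [Finset.card_insert_of_notMem haT, Finset.prod_insert haT]
    have hsd : insert a s \ insert a T = s \ T := by
      ext x; simp only [Finset.mem_sdiff, Finset.mem_insert]
      constructor
      · rintro ⟨h1 | h1, h2⟩
        · exact absurd (Or.inl h1) h2
        · exact ⟨h1, fun hx => h2 (Or.inr hx)⟩
      · rintro ⟨h1, h2⟩
        exact ⟨Or.inr h1, fun hx => hx.elim (fun he => ha (he ▸ h1)) h2⟩
    rw [hsd]
    have hiff : t ≤ T.card + 1 ↔ t - 1 ≤ T.card := by omega
    by_cases h : t - 1 ≤ T.card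
    · rw [if_pos (hiff.2 h), if_pos h]; ring
    · rw [if_neg (fun hc => h (hiff.1 hc)), if_neg h]; ring
  · -- sum over T ⊆ s (a ∉ T): factor out (1 - p a)
    refine Finset.sum_congr rfl fun T hT => ?_
    simp only [Finset.mem_powerset] at hT
    have haT : a ∉ T := fun h => ha (hT h)
    have hsd : insert a s \ T = insert a (s \ T) := by
      ext x; simp only [Finset.mem_sdiff, Finset.mem_insert]
      constructor
      · rintro ⟨h1 | h1, h2⟩
        · exact Or.inl h1
        · exact Or.inr ⟨h1, h2⟩
      · rintro (rfl | ⟨h1, h2⟩)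
        · exact ⟨Or.inl rfl, haT⟩
        · exact ⟨Or.inr h1, h2⟩
    have haSd : a ∉ s \ T := fun h => ha (Finset.mem_sdiff.1 h).1
    rw [hsd, Finset.prod_insert haSd]
    split_ifs <;> ring

/-- PeerNomination is monotonic.  If reviewer i₀ improves agent
j's position (σ' i₀ j ≤ σ i₀ j) while all other reviews are unchanged, then
j's acceptance probability does not decrease. -/
theorem peerNomination_monotonic (n : ℕ)
    (Rev : Fin n → Finset (Fin n)) (j i₀ : Fin n) (hi₀ : i₀ ∈ Rev j)
    (Q : ℝ) (hQ : 0 ≤ Q)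
    (σ σ' : Fin n → Fin n → ℕ)
    (himpr : σ' i₀ j ≤ σ i₀ j)
    (hother : ∀ i : Fin n, i ≠ i₀ → σ i j = σ' i j) :
    accProb (Rev j) (fun i => nomProbOfRank Q (σ i j)) (((Rev j).card + 1) / 2)
      ≤ accProb (Rev j) (fun i => nomProbOfRank Q (σ' i j)) (((Rev j).card + 1) / 2) := by
  set p : Fin n → ℝ := fun i => nomProbOfRank Q (σ i j) with hp
  set q : Fin n → ℝ := fun i => nomProbOfRank Q (σ' i j) with hq
  set t : ℕ := ((Rev j).card + 1) / 2 with ht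
  set s : Finset (Fin n) := (Rev j).erase i₀ with hs
  have ha : i₀ ∉ s := Finset.notMem_erase _ _
  have hins : insert i₀ s = Rev j := Finset.insert_erase hi₀
  have hbound : ∀ i ∈ s, 0 ≤ p i ∧ p i ≤ 1 := fun i _ =>
    ⟨nomProb_nonneg Q hQ _, nomProb_le_one Q _⟩
  have heq : ∀ i ∈ s, p i = q i := fun i hi => by
    simp only [hp, hq, hother i (Finset.ne_of_mem_erase hi)]
  calc accProb (Rev j) p t
      = p i₀ * accProb s p (t - 1) + (1 - p i₀) * accProb s p t := by
        rw [← hins, accProb_insert ha]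
    _ ≤ q i₀ * accProb s p (t - 1) + (1 - q i₀) * accProb s p t := by
        have h1 : p i₀ ≤ q i₀ := nomProb_anti Q hQ himpr
        have h2 : accProb s p t ≤ accProb s p (t - 1) :=
          accProb_anti_t hbound (Nat.sub_le t 1)
        nlinarith
    _ = q i₀ * accProb s q (t - 1) + (1 - q i₀) * accProb s q t := by
        rw [accProb_congr heq, accProb_congr heq]
    _ = accProb (Rev j) q t := by rw [← hins, accProb_insert ha]
end
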